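/- arXiv:1803.11456 — 3 statements merged into one kernel-verified Lean document; each statement's English description precedes it below -/
import Mathlib

section
/- Let I, R : [0,∞) → ℝ be locally absolutely continuous with I > 0, and suppose the nonnegative functions g = I·h₁ + 1/(I·h₁) - 2 and (R'/I)²/(I·h₁) are in L¹([0,∞)), where h₁ > 0 is measurable. Then R'/I ∈ L¹([0,∞)) + L²([0,∞)); more precisely, with S₁ = {t : 1/2 ≤ I(t)h₁(t) ≤ 2}, one has R'/I ∈ L²(S₁) and R'/I ∈ L¹([0,∞)\S₁). -/
open MeasureTheory Set

theorem stmt_13 (I R h₁ : ℝ → ℝ)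
    (hI_pos : ∀ t ∈ Ici (0 : ℝ), 0 < I t) (hh₁_pos : ∀ t ∈ Ici (0 : ℝ), 0 < h₁ t)
    (hI_AC : ∀ a b : ℝ, 0 ≤ a → a ≤ b → ∫ t in a..b, deriv I t = I b - I a)
    (hR_AC : ∀ a b : ℝ, 0 ≤ a → a ≤ b → ∫ t in a..b, deriv R t = R b - R a)
    (hg_nonneg : ∀ t ∈ Ici (0 : ℝ), 0 ≤ I t * h₁ t + 1 / (I t * h₁ t) - 2)
    (hg_int : IntegrableOn (fun t => I t * h₁ t + 1 / (I t * h₁ t) - 2) (Ici 0))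
    (hq_int : IntegrableOn (fun t => (deriv R t / I t) ^ 2 / (I t * h₁ t)) (Ici 0)) :
    IntegrableOn (fun t => (deriv R t / I t) ^ 2)
        {t ∈ Ici (0 : ℝ) | 1 / 2 ≤ I t * h₁ t ∧ I t * h₁ t ≤ 2} ∧
      IntegrableOn (fun t => |deriv R t / I t|)
        (Ici 0 \ {t ∈ Ici (0 : ℝ) | 1 / 2 ≤ I t * h₁ t ∧ I t * h₁ t ≤ 2}) := by
  classical
  set μ : Measure ℝ := volume with hμ
  set S₁ : Set ℝ := {t ∈ Ici (0 : ℝ) | 1 / 2 ≤ I t * h₁ t ∧ I t * h₁ t ≤ 2} with hS₁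
  have hRd : Measurable (deriv R) := measurable_deriv R
  -- measurable version of I on [0,∞)
  have hunc : Measurable (fun p : ℝ × ℝ => (Ioc (0:ℝ) p.1).indicator (deriv I) p.2) := by
    have hset : MeasurableSet {p : ℝ × ℝ | p.2 ∈ Ioc (0:ℝ) p.1} := by
      have : {p : ℝ × ℝ | p.2 ∈ Ioc (0:ℝ) p.1}
          = {p : ℝ × ℝ | (0:ℝ) < p.2} ∩ {p : ℝ × ℝ | p.2 ≤ p.1} := by
        ext p; simp [mem_Ioc]
      rw [this]
      exact (measurableSet_lt measurable_const measurable_snd).inter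
        (measurableSet_le measurable_snd measurable_fst)
    simp only [Set.indicator_apply]
    exact Measurable.ite hset ((measurable_deriv I).comp measurable_snd) measurable_const
  have hF : Measurable fun b => ∫ t, (Ioc (0:ℝ) b).indicator (deriv I) t :=
    (hunc.stronglyMeasurable.integral_prod_right').measurable
  set I' : ℝ → ℝ := fun b => I 0 + ∫ t, (Ioc (0:ℝ) b).indicator (deriv I) t with hI'def
  have hI'm : Measurable I' := measurable_const.add hF
  have hIeq : ∀ t ∈ Ici (0:ℝ), I t = I' t := by
    intro b hb
    have h := hI_AC 0 b le_rfl hb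
    rw [intervalIntegral.integral_of_le hb, ← integral_indicator measurableSet_Ioc] at h
    simp only [hI'def]
    linarith
  -- measurable version of (R'/I)^2
  set f' : ℝ → ℝ := fun t => (deriv R t / I' t) ^ 2 with hf'def
  have hf'm : Measurable f' := (hRd.div hI'm).pow measurable_const
  -- the hypothesis integrand and its measurable representative
  set Q : ℝ → ℝ := fun t => (deriv R t / I t) ^ 2 / (I t * h₁ t) with hQdef
  have hQsm : AEStronglyMeasurable Q (μ.restrict (Ici 0)) := hq_int.aestronglyMeasurable
  set q' : ℝ → ℝ := hQsm.mk Q with hq'def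
  have hq'm : Measurable q' := hQsm.stronglyMeasurable_mk.measurable
  have hQq' : Q =ᵐ[μ.restrict (Ici 0)] q' := hQsm.ae_eq_mk
  set E : Set ℝ := {t | Q t ≠ q' t} ∩ Ici 0 with hEdef
  have hE0 : μ E = 0 := by
    have h := hQq'
    rw [Filter.EventuallyEq, ae_iff] at h
    rw [Measure.restrict_apply' measurableSet_Ici] at h
    exact h
  set E' : Set ℝ := toMeasurable μ E with hE'def
  have hE'm : MeasurableSet E' := measurableSet_toMeasurable μ E
  have hE'0 : μ E' = 0 := by rw [hE'def, measure_toMeasurable]; exact hE0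
  set x' : ℝ → ℝ := fun t => f' t / q' t with hx'def
  have hx'm : Measurable x' := hf'm.div hq'm
  set A : Set ℝ := {t | f' t = 0} with hAdef
  have hAm : MeasurableSet A := hf'm (measurableSet_singleton 0)
  -- key pointwise identification
  have hkey : ∀ t, t ∈ Ici (0:ℝ) → t ∉ E' → f' t ≠ 0 →
      I t * h₁ t = x' t ∧ Q t = q' t := by
    intro t ht htE hf0
    have hq : Q t = q' t := by
      by_contra h
      exact htE (subset_toMeasurable μ E ⟨h, ht⟩)
    have hx : 0 < I t * h₁ t := mul_pos (hI_pos t ht) (hh₁_pos t ht)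
    have hIt : I t = I' t := hIeq t ht
    have hQQ : Q t = f' t / (I t * h₁ t) := by
      show (deriv R t / I t) ^ 2 / (I t * h₁ t) = (deriv R t / I' t) ^ 2 / (I t * h₁ t)
      rw [hIt]
    refine ⟨?_, hq⟩
    show I t * h₁ t = f' t / q' t
    rw [← hq, hQQ]
    field_simp
  -- the "zero" part
  have hA1 : IntegrableOn (fun t => (deriv R t / I t) ^ 2) (A ∩ Ici 0) μ := by
    have hmem : ∀ᵐ t ∂μ.restrict (A ∩ Ici (0:ℝ)), t ∈ A ∩ Ici (0:ℝ) :=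
      ae_restrict_mem (hAm.inter measurableSet_Ici)
    have : (fun t => (deriv R t / I t) ^ 2) =ᵐ[μ.restrict (A ∩ Ici 0)] (fun _ => (0:ℝ)) := by
      filter_upwards [hmem] with t ht
      have h1 : I t = I' t := hIeq t ht.2
      have h2 : f' t = 0 := ht.1
      simp only [hf'def] at h2
      rw [h1]; exact h2
    exact (integrable_zero _ _ _).congr this.symm
  have hA2 : IntegrableOn (fun t => |deriv R t / I t|) (A ∩ Ici 0) μ := by
    have hmem : ∀ᵐ t ∂μ.restrict (A ∩ Ici (0:ℝ)), t ∈ A ∩ Ici (0:ℝ) :=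
      ae_restrict_mem (hAm.inter measurableSet_Ici)
    have : (fun t => |deriv R t / I t|) =ᵐ[μ.restrict (A ∩ Ici 0)] (fun _ => (0:ℝ)) := by
      filter_upwards [hmem] with t ht
      have h1 : I t = I' t := hIeq t ht.2
      have h2 : f' t = 0 := ht.1
      simp only [hf'def] at h2
      have h3 : deriv R t / I' t = 0 := by
        exact pow_eq_zero_iff (n := 2) (by norm_num) |>.mp h2
      rw [h1, h3, abs_zero]
    exact (integrable_zero _ _ _).congr this.symm
  -- measurable supersets
  set M : Set ℝ := Ici 0 ∩ ({t | 1/2 ≤ x' t} ∩ {t | x' t ≤ 2}) with hMdef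
  have hMm : MeasurableSet M :=
    measurableSet_Ici.inter ((measurableSet_le measurable_const hx'm).inter
      (measurableSet_le hx'm measurable_const))
  set T₁ : Set ℝ := (M ∩ Aᶜ) ∪ (E' ∩ Ici 0) with hT₁def
  have hT₁m : MeasurableSet T₁ := (hMm.inter hAm.compl).union (hE'm.inter measurableSet_Ici)
  have hT₁sub : T₁ ⊆ Ici 0 := by
    rintro t (⟨⟨ht, _⟩, _⟩ | ⟨_, ht⟩) <;> exact ht
  set T₂ : Set ℝ := ((Ici 0 ∩ Mᶜ) ∩ Aᶜ) ∪ (E' ∩ Ici 0) with hT₂def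
  have hT₂m : MeasurableSet T₂ :=
    ((measurableSet_Ici.inter hMm.compl).inter hAm.compl).union (hE'm.inter measurableSet_Ici)
  have hT₂sub : T₂ ⊆ Ici 0 := by
    rintro t (⟨⟨ht, _⟩, _⟩ | ⟨_, ht⟩) <;> exact ht
  -- a.e. facts on a measurable T ⊆ Ici 0
  have haeE' : ∀ᵐ t ∂μ, t ∉ E' := by
    rw [ae_iff]
    simpa using hE'0
  -- integrability on T₁
  have hT₁int : IntegrableOn (fun t => (deriv R t / I t) ^ 2) T₁ μ := by
    have hmem : ∀ᵐ t ∂μ.restrict T₁, t ∈ T₁ := ae_restrict_mem hT₁m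
    have hnE : ∀ᵐ t ∂μ.restrict T₁, t ∉ E' :=
      haeE'.filter_mono (ae_mono Measure.restrict_le_self)
    have hgood : ∀ᵐ t ∂μ.restrict T₁, t ∈ M ∩ Aᶜ := by
      filter_upwards [hmem, hnE] with t ht htE
      rcases ht with h | h
      · exact h
      · exact absurd h.1 htE
    refine Integrable.mono' (Integrable.const_mul (hq_int.mono_set hT₁sub) 2) ?_ ?_
    · refine (hf'm.aestronglyMeasurable).congr ?_
      filter_upwards [hgood] with t ht
      show (deriv R t / I' t) ^ 2 = (deriv R t / I t) ^ 2
      rw [← hIeq t ht.1.1]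
    · filter_upwards [hgood, hnE] with t ht htE
      obtain ⟨⟨htI, htx1, htx2⟩, htA⟩ := ht
      have hf0 : f' t ≠ 0 := htA
      obtain ⟨hxeq, hQeq⟩ := hkey t htI htE hf0
      have hx : 0 < I t * h₁ t := mul_pos (hI_pos t htI) (hh₁_pos t htI)
      have hIt : I t = I' t := hIeq t htI
      have hfval : (deriv R t / I t) ^ 2 = Q t * (I t * h₁ t) := by
        show _ = (deriv R t / I t) ^ 2 / (I t * h₁ t) * (I t * h₁ t)
        rw [div_mul_cancel₀ _ hx.ne']
      have hQnn : 0 ≤ Q t := by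
        show 0 ≤ (deriv R t / I t) ^ 2 / (I t * h₁ t)
        exact div_nonneg (sq_nonneg _) hx.le
      have hxle : I t * h₁ t ≤ 2 := by rw [hxeq]; exact htx2
      rw [Real.norm_eq_abs, abs_of_nonneg (sq_nonneg _), hfval]
      calc Q t * (I t * h₁ t) ≤ Q t * 2 := by
            exact mul_le_mul_of_nonneg_left hxle hQnn
        _ = 2 * Q t := mul_comm _ _
  -- integrability on T₂
  have hT₂int : IntegrableOn (fun t => |deriv R t / I t|) T₂ μ := by
    have hmem : ∀ᵐ t ∂μ.restrict T₂, t ∈ T₂ := ae_restrict_mem hT₂m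
    have hnE : ∀ᵐ t ∂μ.restrict T₂, t ∉ E' :=
      haeE'.filter_mono (ae_mono Measure.restrict_le_self)
    have hgood : ∀ᵐ t ∂μ.restrict T₂, t ∈ (Ici 0 ∩ Mᶜ) ∩ Aᶜ := by
      filter_upwards [hmem, hnE] with t ht htE
      rcases ht with h | h
      · exact h
      · exact absurd h.1 htE
    have hmaj : IntegrableOn
        (fun t => ((deriv R t / I t) ^ 2 / (I t * h₁ t)
          + 4 * (I t * h₁ t + 1 / (I t * h₁ t) - 2)) / 2) T₂ μ := by
      exact IntegrableOn.mono_set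
        (Integrable.div_const (Integrable.add hq_int (Integrable.const_mul hg_int 4)) 2) hT₂sub
    refine Integrable.mono' hmaj ?_ ?_
    · refine ((hRd.div hI'm).abs.aestronglyMeasurable).congr ?_
      filter_upwards [hgood] with t ht
      show |deriv R t / I' t| = |deriv R t / I t|
      rw [← hIeq t ht.1.1]
    · filter_upwards [hgood, hnE] with t ht htE
      obtain ⟨⟨htI, htM⟩, htA⟩ := ht
      have hf0 : f' t ≠ 0 := htA
      obtain ⟨hxeq, hQeq⟩ := hkey t htI htE hf0
      set x := I t * h₁ t with hxdef
      have hx : 0 < x := mul_pos (hI_pos t htI) (hh₁_pos t htI)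
      have hxcond : ¬(1/2 ≤ x ∧ x ≤ 2) := by
        intro hc
        refine htM ⟨htI, ?_, ?_⟩
        · show 1/2 ≤ x' t
          rw [← hxeq]; exact hc.1
        · show x' t ≤ 2
          rw [← hxeq]; exact hc.2
      set a := deriv R t / I t with hadef
      set u := a ^ 2 / x with hudef
      have hu : u * x = a ^ 2 := div_mul_cancel₀ _ hx.ne'
      set v := 1 / x with hvdef
      have hv : v * x = 1 := one_div_mul_cancel hx.ne'
      have hb1 : 2 * |a| ≤ u + x := by
        nlinarith [sq_nonneg (|a| - x), sq_abs a, hx, hu]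
      have hb2 : x ≤ 4 * (x + v - 2) := by
        rcases lt_or_ge x (1/2) with hc | hc
        · have hv2 : 2 < v := by
            rw [hvdef]
            rw [lt_div_iff₀ hx]
            linarith
          linarith
        · have hc2 : 2 < x := by
            by_contra h
            push_neg at h
            exact hxcond ⟨hc, h⟩
          nlinarith [hv, hc2, hx,
            mul_pos (by linarith : (0:ℝ) < x - 2) (by linarith : (0:ℝ) < 3 * x - 2)]
      rw [Real.norm_eq_abs, abs_abs]
      linarith [hb1, hb2]
  -- conclude
  have hsub1 : S₁ ⊆ (A ∩ Ici 0) ∪ T₁ := by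
    intro t ht
    obtain ⟨htI, htc⟩ := ht
    by_cases hf0 : f' t = 0
    · exact Or.inl ⟨hf0, htI⟩
    · by_cases htE : t ∈ E'
      · exact Or.inr (Or.inr ⟨htE, htI⟩)
      · refine Or.inr (Or.inl ⟨⟨htI, ?_, ?_⟩, hf0⟩)
        · show 1/2 ≤ x' t
          rw [← (hkey t htI htE hf0).1]; exact htc.1
        · show x' t ≤ 2
          rw [← (hkey t htI htE hf0).1]; exact htc.2
  have hsub2 : Ici 0 \ S₁ ⊆ (A ∩ Ici 0) ∪ T₂ := by
    intro t ht
    obtain ⟨htI, htS⟩ := ht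
    by_cases hf0 : f' t = 0
    · exact Or.inl ⟨hf0, htI⟩
    · by_cases htE : t ∈ E'
      · exact Or.inr (Or.inr ⟨htE, htI⟩)
      · refine Or.inr (Or.inl ⟨⟨htI, ?_⟩, hf0⟩)
        intro htM
        apply htS
        refine ⟨htI, ?_, ?_⟩
        · rw [(hkey t htI htE hf0).1]; exact htM.2.1
        · rw [(hkey t htI htE hf0).1]; exact htM.2.2
  exact ⟨(hA1.union hT₁int).mono_set hsub1, (hA2.union hT₂int).mono_set hsub2⟩
end

section
/- Let h : [0,∞) → (0, ∞) be measurable with h + 1/h - 2 ∈ L¹([0,∞)). Then (1 - h) and (1 - 1/h) both belong to L¹([0,∞)) + L²([0,∞)). -/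
open MeasureTheory Set

private lemma key_14 (h : ℝ → ℝ) (hmeas : Measurable h)
    (hpos : ∀ t ∈ Ici (0 : ℝ), 0 < h t)
    (hint : IntegrableOn (fun t => h t + 1 / h t - 2) (Ici 0)) :
    ∃ f₁ f₂ : ℝ → ℝ, IntegrableOn f₁ (Ici 0) ∧ IntegrableOn (fun t => f₂ t ^ 2) (Ici 0) ∧
      ∀ t ∈ Ici (0 : ℝ), 1 - h t = f₁ t + f₂ t := by
  set S : Set ℝ := {t | 1/2 < h t ∧ h t < 2} with hSdef
  have hSm : MeasurableSet S :=
    (measurableSet_lt measurable_const hmeas).inter (measurableSet_lt hmeas measurable_const)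
  have hg : IntegrableOn (fun t => 2 * (h t + 1 / h t - 2)) (Ici 0) := hint.const_mul 2
  refine ⟨fun t => if t ∈ S then 0 else 1 - h t, S.indicator (fun t => 1 - h t), ?_, ?_, ?_⟩
  · refine hg.mono' ?_ ?_
    · exact (Measurable.ite hSm measurable_const (measurable_const.sub hmeas)).aestronglyMeasurable
    · rw [ae_restrict_iff' measurableSet_Ici]
      filter_upwards with t ht
      have hp := hpos t ht
      by_cases hts : t ∈ S
      · simp only [hts, if_true, norm_zero]
        have h11 : 1 / h t * h t = 1 := by field_simp
        have : 0 * h t ≤ 2 * (h t + 1 / h t - 2) * h t := by nlinarith [sq_nonneg (h t - 1)]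
        simpa using le_of_mul_le_mul_right this hp
      · simp only [hts, if_false, Real.norm_eq_abs]
        have hor : h t ≤ 1/2 ∨ 2 ≤ h t := by
          by_contra hc
          push_neg at hc
          exact hts ⟨hc.1, hc.2⟩
        rcases hor with h1 | h1
        · rw [abs_of_nonneg (by linarith)]
          have h11 : 1 / h t * h t = 1 := by field_simp
          have : (1 - h t) * h t ≤ 2 * (h t + 1 / h t - 2) * h t := by nlinarith
          exact le_of_mul_le_mul_right this hp
        · rw [abs_of_nonpos (by linarith)]
          have h11 : 1 / h t * h t = 1 := by field_simp
          have : (-(1 - h t)) * h t ≤ 2 * (h t + 1 / h t - 2) * h t := by nlinarith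
          exact le_of_mul_le_mul_right this hp
  · refine hg.mono' ?_ ?_
    · exact (((measurable_const.sub hmeas).indicator hSm).pow_const 2).aestronglyMeasurable
    · rw [ae_restrict_iff' measurableSet_Ici]
      filter_upwards with t ht
      have hp := hpos t ht
      have h11 : 1 / h t * h t = 1 := by field_simp
      by_cases hts : t ∈ S
      · rw [indicator_of_mem hts]
        rw [Real.norm_eq_abs, abs_of_nonneg (sq_nonneg _)]
        have h1 : 1/2 < h t := hts.1
        have h2 : h t < 2 := hts.2
        have : (1 - h t)^2 * h t ≤ 2 * (h t + 1 / h t - 2) * h t := by nlinarith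
        exact le_of_mul_le_mul_right this hp
      · rw [indicator_of_notMem hts]
        simp only [ne_eq, OfNat.ofNat_ne_zero, not_false_eq_true, zero_pow, norm_zero]
        have : (h t - 1)^2 = (h t + 1/h t - 2) * h t := by field_simp; ring
        nlinarith [sq_nonneg (h t - 1)]
  · intro t ht
    by_cases hts : t ∈ S
    · simp [hts]
    · simp [hts]

theorem stmt_14 (h : ℝ → ℝ) (hmeas : Measurable h)
    (hpos : ∀ t ∈ Ici (0 : ℝ), 0 < h t)
    (hint : IntegrableOn (fun t => h t + 1 / h t - 2) (Ici 0)) :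
    (∃ f₁ f₂ : ℝ → ℝ, IntegrableOn f₁ (Ici 0) ∧ IntegrableOn (fun t => f₂ t ^ 2) (Ici 0) ∧
        ∀ t ∈ Ici (0 : ℝ), 1 - h t = f₁ t + f₂ t) ∧
      (∃ f₁ f₂ : ℝ → ℝ, IntegrableOn f₁ (Ici 0) ∧ IntegrableOn (fun t => f₂ t ^ 2) (Ici 0) ∧
        ∀ t ∈ Ici (0 : ℝ), 1 - 1 / h t = f₁ t + f₂ t) := by
  constructor
  · exact key_14 h hmeas hpos hint
  · refine key_14 (fun t => 1 / h t) (hmeas.const_div 1) ?_ ?_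
    · intro t ht
      exact div_pos one_pos (hpos t ht)
    · refine hint.congr_fun ?_ measurableSet_Ici
      intro t ht
      have hp := (hpos t ht).ne'
      field_simp
      ring
end

section
/- Let q : [0,∞) → ℝ be locally integrable and suppose ∑_{n≥0} max_{n ≤ t ≤ n+1} (∫ₙᵗ q(s) ds)² < ∞. Then ∑_{n≥0} ( ∫ₙ^{n+2} g_n(t) dt · ∫ₙ^{n+2} 1/g_n(t) dt - 4 ) < ∞, where g_n(t) = exp(2∫ₙᵗ q(s) ds). -/
open MeasureTheory Set intervalIntegral

/-!
Let `F_n(t) = ∫ₙᵗ q` and let `M n = max_{[n, n+1]} F_n²` (`sqPrimitiveSup q n`) be the summands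
of the hypothesis. Splitting `[n, n+2]` at `n + 1` gives `F_n² ≤ 2 (M n + M (n+1))` there. For a
function `f` with `f² ≤ δ ≤ 1` on an interval of length `L`, the bounds `1 + x ≤ eˣ ≤ 1 + x + x²`
give `∫ e^{±f} = L ± ∫ f + O(L δ)`; the first-order terms cancel in the product, so
`|∫ e^f · ∫ e^{-f} - L²| ≤ 3 L² δ`. With `f = 2 F_n` and `L = 2`, the summands are
`O(M n + M (n+1))`.
-/

theorem Real.exp_le_one_add_add_sq {x : ℝ} (hx : |x| ≤ 1) : Real.exp x ≤ 1 + x + x ^ 2 := by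
  have := Real.abs_exp_sub_one_sub_id_le hx
  linarith [le_abs_self (Real.exp x - 1 - x)]

section ExpIntegral

variable {f : ℝ → ℝ} {a b δ : ℝ}

theorem integral_exp_bounds_of_sq_le (hab : a ≤ b) (hf : ContinuousOn f (Icc a b))
    (hδ : δ ≤ 1) (hfδ : ∀ t ∈ Icc a b, f t ^ 2 ≤ δ) :
    (b - a) + ∫ t in a..b, f t ≤ ∫ t in a..b, Real.exp (f t) ∧
      ∫ t in a..b, Real.exp (f t) ≤ (b - a) * (1 + δ) + ∫ t in a..b, f t := by
  have hfi : IntervalIntegrable f volume a b := hf.intervalIntegrable_of_Icc hab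
  have hexpi : IntervalIntegrable (fun t => Real.exp (f t)) volume a b :=
    (Real.continuous_exp.comp_continuousOn hf).intervalIntegrable_of_Icc hab
  constructor
  · calc (b - a) + ∫ t in a..b, f t = ∫ t in a..b, (1 + f t) := by
          rw [integral_add intervalIntegrable_const hfi, intervalIntegral.integral_const,
            smul_eq_mul, mul_one]
      _ ≤ ∫ t in a..b, Real.exp (f t) :=
          integral_mono_on hab (intervalIntegrable_const.add hfi) hexpi
            fun t _ => by linarith [Real.add_one_le_exp (f t)]
  · calc ∫ t in a..b, Real.exp (f t) ≤ ∫ t in a..b, (1 + δ + f t) :=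
          integral_mono_on hab hexpi (intervalIntegrable_const.add hfi) fun t ht => by
            have hf1 : |f t| ≤ 1 := (sq_le_one_iff_abs_le_one _).mp ((hfδ t ht).trans hδ)
            linarith [Real.exp_le_one_add_add_sq hf1, hfδ t ht]
      _ = (b - a) * (1 + δ) + ∫ t in a..b, f t := by
          rw [integral_add intervalIntegrable_const hfi, intervalIntegral.integral_const,
            smul_eq_mul, mul_comm]

theorem sq_integral_le_of_sq_le (hab : a ≤ b) (hfδ : ∀ t ∈ Icc a b, f t ^ 2 ≤ δ) :
    (∫ t in a..b, f t) ^ 2 ≤ (b - a) ^ 2 * δ := by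
  have hδ : 0 ≤ δ := (sq_nonneg _).trans (hfδ a ⟨le_rfl, hab⟩)
  have h := norm_integral_le_of_norm_le_const (C := √δ) (f := f) (a := a) (b := b) fun t ht => by
    rw [uIoc_of_le hab] at ht
    exact Real.abs_le_sqrt (hfδ t (Ioc_subset_Icc_self ht))
  rw [Real.norm_eq_abs, abs_of_nonneg (sub_nonneg.2 hab)] at h
  calc (∫ t in a..b, f t) ^ 2 = |∫ t in a..b, f t| ^ 2 := (sq_abs _).symm
    _ ≤ (√δ * (b - a)) ^ 2 := pow_le_pow_left₀ (abs_nonneg _) h 2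
    _ = (b - a) ^ 2 * δ := by rw [mul_pow, Real.sq_sqrt hδ, mul_comm]

theorem abs_integral_exp_mul_integral_exp_neg_sub_sq_le (hab : a ≤ b)
    (hf : ContinuousOn f (Icc a b)) (hδ : δ ≤ 1) (hfδ : ∀ t ∈ Icc a b, f t ^ 2 ≤ δ) :
    |(∫ t in a..b, Real.exp (f t)) * (∫ t in a..b, Real.exp (-f t)) - (b - a) ^ 2| ≤
      3 * (b - a) ^ 2 * δ := by
  have hδ0 : 0 ≤ δ := (sq_nonneg _).trans (hfδ a ⟨le_rfl, hab⟩)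
  obtain ⟨hA₁, hA₂⟩ := integral_exp_bounds_of_sq_le hab hf hδ hfδ
  obtain ⟨hB₁, hB₂⟩ := integral_exp_bounds_of_sq_le (f := fun t => -f t) hab hf.neg hδ
    fun t ht => by simpa using hfδ t ht
  simp only [intervalIntegral.integral_neg, ← sub_eq_add_neg] at hB₁ hB₂
  set A := ∫ t in a..b, Real.exp (f t)
  set B := ∫ t in a..b, Real.exp (-f t)
  set I := ∫ t in a..b, f t
  set L := b - a
  have hL : 0 ≤ L := sub_nonneg.2 hab
  have hI : I ^ 2 ≤ L ^ 2 * δ := sq_integral_le_of_sq_le hab hfδ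
  have hIL : |I| ≤ L := abs_le_of_sq_le_sq (by nlinarith) hL
  have hlower : (L + I) * (L - I) ≤ A * B :=
    mul_le_mul hA₁ hB₁ (by linarith [le_abs_self I]) (by linarith [neg_abs_le I])
  have hupper : A * B ≤ (L * (1 + δ) + I) * (L * (1 + δ) - I) :=
    mul_le_mul hA₂ hB₂ (by linarith [le_abs_self I]) (by nlinarith [neg_abs_le I])
  rw [abs_le]
  constructor <;> nlinarith [mul_nonneg (sq_nonneg L) hδ0]

end ExpIntegral

noncomputable def sqPrimitiveSup (q : ℝ → ℝ) (a : ℝ) : ℝ :=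
  ⨆ t : Icc a (a + 1), (∫ s in a..(t : ℝ), q s) ^ 2

section Primitive

variable {q : ℝ → ℝ} {a b t : ℝ}

theorem continuousOn_primitive_interval_of_le (hab : a ≤ b) (hq : IntegrableOn q (Icc a b)) :
    ContinuousOn (fun t => ∫ s in a..t, q s) (Icc a b) := by
  rw [← uIcc_of_le hab] at hq ⊢
  exact continuousOn_primitive_interval hq

theorem sq_integral_le_sqPrimitiveSup (hq : IntegrableOn q (Icc a (a + 1)))
    (ht : t ∈ Icc a (a + 1)) : (∫ s in a..t, q s) ^ 2 ≤ sqPrimitiveSup q a := by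
  have hcont : ContinuousOn (fun t => (∫ s in a..t, q s) ^ 2) (Icc a (a + 1)) :=
    (continuousOn_primitive_interval_of_le (by linarith) hq).pow 2
  refine le_ciSup (f := fun t : Icc a (a + 1) => (∫ s in a..(t : ℝ), q s) ^ 2) ?_ ⟨t, ht⟩
  simpa only [image_eq_range] using isCompact_Icc.bddAbove_image hcont

theorem sq_integral_le_sqPrimitiveSup_add (hq : IntegrableOn q (Icc a (a + 2)))
    (ht : t ∈ Icc a (a + 2)) :
    (∫ s in a..t, q s) ^ 2 ≤ 2 * sqPrimitiveSup q a + 2 * sqPrimitiveSup q (a + 1) := by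
  have hq₁ : IntegrableOn q (Icc a (a + 1)) := hq.mono_set (Icc_subset_Icc le_rfl (by linarith))
  have hq₂ : IntegrableOn q (Icc (a + 1) (a + 1 + 1)) :=
    hq.mono_set (Icc_subset_Icc (by linarith) (by linarith))
  have hS₀ : 0 ≤ sqPrimitiveSup q a := by
    simpa using sq_integral_le_sqPrimitiveSup hq₁ (left_mem_Icc.2 (by linarith))
  have hS₁ : 0 ≤ sqPrimitiveSup q (a + 1) := by
    simpa using sq_integral_le_sqPrimitiveSup hq₂ (left_mem_Icc.2 (by linarith))
  rcases le_or_gt t (a + 1) with h | h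
  · linarith [sq_integral_le_sqPrimitiveSup hq₁ ⟨ht.1, h⟩]
  · have hqi : ∀ c ∈ Icc a (a + 2), ∀ d ∈ Icc a (a + 2), IntervalIntegrable q volume c d :=
      fun c hc d hd => (hq.mono_set (uIcc_subset_Icc hc hd)).intervalIntegrable
    have hsplit : ∫ s in a..t, q s = (∫ s in a..a + 1, q s) + ∫ s in a + 1..t, q s :=
      (integral_add_adjacent_intervals (hqi a (left_mem_Icc.2 (by linarith)) (a + 1)
        ⟨by linarith, by linarith⟩) (hqi (a + 1) ⟨by linarith, by linarith⟩ t ht)).symm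
    have h₁ := sq_integral_le_sqPrimitiveSup hq₁ (right_mem_Icc.2 (by linarith))
    have h₂ := sq_integral_le_sqPrimitiveSup hq₂ ⟨h.le, by linarith [ht.2]⟩
    rw [hsplit]
    nlinarith [sq_nonneg ((∫ s in a..a + 1, q s) - ∫ s in a + 1..t, q s)]

end Primitive

theorem stmt_15 (q : ℝ → ℝ)
    (hloc : ∀ r : ℝ, 0 < r → IntegrableOn q (Icc 0 r))
    (hsum : Summable (fun n : ℕ =>
      ⨆ t : Icc (n : ℝ) ((n : ℝ) + 1), (∫ s in (n : ℝ)..(t : ℝ), q s) ^ 2)) :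
    Summable (fun n : ℕ =>
      (∫ t in (n : ℝ)..((n : ℝ) + 2), Real.exp (2 * ∫ s in (n : ℝ)..t, q s)) *
        (∫ t in (n : ℝ)..((n : ℝ) + 2), Real.exp (-(2 * ∫ s in (n : ℝ)..t, q s))) - 4) := by
  change Summable fun n : ℕ => sqPrimitiveSup q n at hsum
  set ε : ℕ → ℝ := fun n => 2 * sqPrimitiveSup q n + 2 * sqPrimitiveSup q (n + 1)
  have hε : Summable ε := by
    have hsum₁ := (summable_nat_add_iff 1).mpr hsum
    push_cast at hsum₁
    exact (hsum.mul_left 2).add (hsum₁.mul_left 2)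
  have hsmall : ∀ᶠ n : ℕ in Filter.atTop, 4 * ε n ≤ 1 :=
    (hε.tendsto_atTop_zero.const_mul 4).eventually (eventually_le_nhds (by norm_num))
  refine Summable.of_norm_bounded_eventually_nat (hε.mul_left 48) ?_
  filter_upwards [hsmall] with n hn
  have hq : IntegrableOn q (Icc (n : ℝ) (n + 2)) :=
    (hloc (n + 2) (by positivity)).mono_set (Icc_subset_Icc n.cast_nonneg le_rfl)
  have hF : ContinuousOn (fun t => 2 * ∫ s in (n : ℝ)..t, q s) (Icc (n : ℝ) (n + 2)) :=
    continuousOn_const.mul (continuousOn_primitive_interval_of_le (by linarith) hq)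
  have hbound := abs_integral_exp_mul_integral_exp_neg_sub_sq_le (by linarith) hF hn
    fun t ht => by nlinarith [sq_integral_le_sqPrimitiveSup_add hq ht]
  rw [Real.norm_eq_abs, show (4 : ℝ) = ((n : ℝ) + 2 - n) ^ 2 by ring]
  exact hbound.trans_eq (by ring)
end
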